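/- arXiv:1905.08165 — 7 statements merged into one kernel-verified Lean document; each statement's English description precedes it below -/
import Mathlib

section
/- Tracking lemma: Let K ≥ 1 and let (w'(s))_{s≥1} be vectors in Σ_K with w'(s) = π for 1 ≤ s ≤ K. Let (A_t)_{t≥1} follow the tracking rule: A_s = s for 1 ≤ s ≤ K and, for t ≥ K, A_{t+1} is any element of argmax_{a∈{1,…,K}} ( Σ_{s=1}^{t+1} w'_a(s) − N_a(t) ), where N_a(t) = #{1 ≤ s ≤ t : A_s = a}. Then for every t ≥ 1 and every a ∈ {1,…,K}, |Σ_{s=1}^t w'_a(s) − N_a(t)| ≤ K. -/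
/-- Number of draws of arm `a` up to and including time `t`. -/
def Ncount {K : ℕ} (A : ℕ → Fin K) (a : Fin K) (t : ℕ) : ℕ :=
  ((Finset.Icc 1 t).filter fun s => A s = a).card

lemma Icc_succ_insert (t : ℕ) : Finset.Icc 1 (t+1) = insert (t+1) (Finset.Icc 1 t) := by
  ext x; simp [Finset.mem_Icc]; omega

lemma Ncount_succ {K : ℕ} (A : ℕ → Fin K) (a : Fin K) (t : ℕ) :
    Ncount A a (t+1) = Ncount A a t + if A (t+1) = a then 1 else 0 := by
  unfold Ncount
  rw [Icc_succ_insert, Finset.filter_insert]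
  split
  · rw [Finset.card_insert_of_notMem (by simp [Finset.mem_Icc])]
  · simp

lemma sumN {K : ℕ} (A : ℕ → Fin K) (t : ℕ) :
    ∑ a : Fin K, Ncount A a t = t := by
  unfold Ncount
  rw [← Finset.card_eq_sum_card_fiberwise (f := A) (fun x _ => Finset.mem_univ _)]
  simp

lemma sumW (K : ℕ) (w' : ℕ → Fin K → ℝ) (hw' : ∀ s, 1 ≤ s → w' s ∈ stdSimplex ℝ (Fin K))
    (t : ℕ) : ∑ a : Fin K, ∑ s ∈ Finset.Icc 1 t, w' s a = t := by
  rw [Finset.sum_comm]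
  rw [Finset.sum_congr rfl (fun s hs => (hw' s (Finset.mem_Icc.mp hs).1).2)]
  simp

lemma lower_aux (K : ℕ) (hK : 1 ≤ K)
    (w' : ℕ → Fin K → ℝ) (hw' : ∀ s, 1 ≤ s → w' s ∈ stdSimplex ℝ (Fin K))
    (A : ℕ → Fin K)
    (hA0 : ∀ s, 1 ≤ s → s ≤ K → (A s : ℕ) = s - 1)
    (htrack : ∀ t, K ≤ t → ∀ b : Fin K,
      (∑ s ∈ Finset.Icc 1 (t + 1), w' s b) - (Ncount A b t : ℝ) ≤
        (∑ s ∈ Finset.Icc 1 (t + 1), w' s (A (t + 1))) - (Ncount A (A (t + 1)) t : ℝ)) :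
    ∀ t, ∀ a : Fin K, (Ncount A a t : ℝ) - (∑ s ∈ Finset.Icc 1 t, w' s a) ≤ 1 := by
  have Wnn : ∀ t a, (0:ℝ) ≤ ∑ s ∈ Finset.Icc 1 t, w' s a := fun t a =>
    Finset.sum_nonneg fun s hs => (hw' s (Finset.mem_Icc.mp hs).1).1 a
  have base : ∀ t, t ≤ K → ∀ a : Fin K, (Ncount A a t : ℝ) ≤ 1 := by
    intro t ht a
    have hsub : ((Finset.Icc 1 t).filter fun s => A s = a) ⊆ {(a:ℕ) + 1} := by
      intro s hs
      simp only [Finset.mem_filter, Finset.mem_Icc] at hs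
      have := hA0 s hs.1.1 (le_trans hs.1.2 ht)
      rw [hs.2] at this
      simp; omega
    have : Ncount A a t ≤ 1 := by
      calc Ncount A a t ≤ ({(a:ℕ)+1} : Finset ℕ).card := Finset.card_le_card hsub
        _ = 1 := Finset.card_singleton _
    exact_mod_cast this
  intro t
  induction t with
  | zero => intro a; simp [Ncount]
  | succ t ih =>
    intro a
    by_cases htK : t + 1 ≤ K
    · linarith [base (t+1) htK a, Wnn (t+1) a]
    · push_neg at htK
      have hKt : K ≤ t := by omega
      rw [Ncount_succ, Finset.sum_Icc_succ_top (by omega : 1 ≤ t + 1)]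
      push_cast
      split_ifs with h
      · -- A (t+1) = a : need W_a(t+1) - N_a(t) ≥ 0
        have hex : ∃ b : Fin K, (0:ℝ) <
            (∑ s ∈ Finset.Icc 1 (t + 1), w' s b) - (Ncount A b t : ℝ) := by
          by_contra hc
          push_neg at hc
          have hsum : ∑ b : Fin K,
              ((∑ s ∈ Finset.Icc 1 (t + 1), w' s b) - (Ncount A b t : ℝ)) = 1 := by
            rw [Finset.sum_sub_distrib, sumW K w' hw']
            rw [show ∑ b : Fin K, (Ncount A b t : ℝ) = (t:ℝ) by
              exact_mod_cast congrArg (Nat.cast (R := ℝ)) (sumN A t)]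
            push_cast; ring
          have : ∑ b : Fin K,
              ((∑ s ∈ Finset.Icc 1 (t + 1), w' s b) - (Ncount A b t : ℝ)) ≤ 0 :=
            Finset.sum_nonpos fun b _ => hc b
          linarith
        obtain ⟨b, hb⟩ := hex
        have := htrack t hKt b
        rw [h] at this
        have h0 : (0:ℝ) ≤ (∑ s ∈ Finset.Icc 1 (t + 1), w' s a) - (Ncount A a t : ℝ) :=
          le_trans (le_of_lt hb) this
        rw [Finset.sum_Icc_succ_top (by omega : 1 ≤ t + 1)] at h0
        linarith
      · have hwnn : 0 ≤ w' (t+1) a := (hw' (t+1) (by omega)).1 a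
        have := ih a
        linarith

/-- tracking lemma. -/
theorem stmt4 (K : ℕ) (hK : 1 ≤ K)
    (w' : ℕ → Fin K → ℝ) (hw' : ∀ s, 1 ≤ s → w' s ∈ stdSimplex ℝ (Fin K))
    (hinit : ∀ s, 1 ≤ s → s ≤ K → w' s = fun _ => (1 : ℝ) / K)
    (A : ℕ → Fin K)
    (hA0 : ∀ s, 1 ≤ s → s ≤ K → (A s : ℕ) = s - 1)
    (htrack : ∀ t, K ≤ t → ∀ b : Fin K,
      (∑ s ∈ Finset.Icc 1 (t + 1), w' s b) - (Ncount A b t : ℝ) ≤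
        (∑ s ∈ Finset.Icc 1 (t + 1), w' s (A (t + 1))) - (Ncount A (A (t + 1)) t : ℝ)) :
    ∀ t, 1 ≤ t → ∀ a : Fin K,
      |(∑ s ∈ Finset.Icc 1 t, w' s a) - (Ncount A a t : ℝ)| ≤ K := by
  intro t ht a
  have hlow := lower_aux K hK w' hw' A hA0 htrack t
  have hsum : ∑ b : Fin K,
      ((∑ s ∈ Finset.Icc 1 t, w' s b) - (Ncount A b t : ℝ)) = 0 := by
    rw [Finset.sum_sub_distrib, sumW K w' hw']
    rw [show ∑ b : Fin K, (Ncount A b t : ℝ) = (t:ℝ) by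
      exact_mod_cast congrArg (Nat.cast (R := ℝ)) (sumN A t)]
    ring
  rw [abs_le]
  constructor
  · have := hlow a
    have : (1:ℝ) ≤ K := by exact_mod_cast hK
    linarith [hlow a]
  · -- upper bound via sum over erase
    have hsplit := Finset.sum_erase_add Finset.univ
      (fun b => (∑ s ∈ Finset.Icc 1 t, w' s b) - (Ncount A b t : ℝ)) (Finset.mem_univ a)
    have h2 : ∑ b ∈ Finset.univ.erase a,
        (((Ncount A b t : ℝ)) - ∑ s ∈ Finset.Icc 1 t, w' s b) ≤
        ∑ _b ∈ Finset.univ.erase a, (1:ℝ) :=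
      Finset.sum_le_sum fun b _ => hlow b
    have hcard : (Finset.univ.erase a).card = K - 1 := by
      rw [Finset.card_erase_of_mem (Finset.mem_univ a)]; simp
    rw [Finset.sum_const, hcard, nsmul_eq_mul] at h2
    have hK1 : ((K - 1 : ℕ) : ℝ) ≤ (K:ℝ) := by
      have : K - 1 ≤ K := Nat.sub_le K 1
      exact_mod_cast this
    have hneg : ∑ b ∈ Finset.univ.erase a,
        (((Ncount A b t : ℝ)) - ∑ s ∈ Finset.Icc 1 t, w' s b) =
        - ∑ b ∈ Finset.univ.erase a,
          ((∑ s ∈ Finset.Icc 1 t, w' s b) - (Ncount A b t : ℝ)) := by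
      rw [← Finset.sum_neg_distrib]
      exact Finset.sum_congr rfl fun b _ => by ring
    rw [hneg] at h2
    rw [hsum] at hsplit
    linarith
end

section
/- Concentration of the empirical means under forced exploration: Let K ≥ 1, μ ∈ ℝ^K, and let (Y_{a,n})_{a∈{1,…,K}, n≥1} be a jointly independent family of real random variables on a probability space (Ω,P) with Y_{a,n} of law N(μ_a, 1). Set μ̂_{a,n} = (1/n)·Σ_{m=1}^n Y_{a,m}. Let (N_a(t))_{a,t} be measurable ℕ-valued random variables satisfying, almost surely, 1 ≤ N_a(t) ≤ t and N_a(t) ≥ √t/(4K) − 2K for all a and t, and set μ̂_a(t) = μ̂_{a,N_a(t)}. Then for every κ > 0 and every integer T ≥ 4, with g(T) = ⌊T^{1/4}⌋, C₄ = κ²/(16K) and C₅ = (4K/κ²)·e^{(2K+1)κ²/2}, the probability that there exist t with g(T) ≤ t ≤ T and a ∈ {1,…,K} such that |μ̂_a(t) − μ_a| ≥ κ is at most C₅·T·e^{−C₄·T^{1/8}}. -/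
/-!
Each empirical mean of `n` independent `N(μ_a, 1)` samples deviates from `μ_a` by `κ` with
probability at most `2 exp (-n κ² / 2)` (Chernoff bound from the Gaussian moment generating
function). For `t ≥ g(T)` forced exploration gives `N_a(t) ≥ √g(T) / (4K) - 2K ≥ c`, where
`c = T^{1/8} / (8K) - 2K`, so the bad event lies, up to a null set, in the union over the arms `a`
and the sample sizes `c ≤ n ≤ T` of the deviation events of `μ̂_{a,n}`. The union bound and the
geometric tail `∑_{n ≥ c} exp (-n x) ≤ exp (x - c x) / x` with `x = κ² / 2` give the bound.
-/

open MeasureTheory ProbabilityTheory Real Finset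
open scoped NNReal

section Hoeffding

variable {Ω : Type*} {mΩ : MeasurableSpace Ω} {P : Measure Ω}

lemma measureReal_abs_sum_range_ge_le {X : ℕ → Ω → ℝ} (h_indep : iIndepFun X P) {c : ℝ≥0}
    {n : ℕ} (h_subG : ∀ i < n, HasSubgaussianMGF (X i) c P) {ε : ℝ} (hε : 0 ≤ ε) :
    P.real {ω | ε ≤ |∑ i ∈ range n, X i ω|} ≤ 2 * exp (-ε ^ 2 / (2 * n * c)) := by
  have := h_indep.isProbabilityMeasure
  have h_upper := HasSubgaussianMGF.measure_sum_range_ge_le_of_iIndepFun h_indep h_subG hε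
  have h_lower : P.real {ω | ε ≤ ∑ i ∈ range n, -X i ω} ≤ exp (-ε ^ 2 / (2 * n * c)) :=
    HasSubgaussianMGF.measure_sum_range_ge_le_of_iIndepFun
      (h_indep.comp (fun _ x ↦ -x) fun _ ↦ measurable_neg) (fun i hi ↦ (h_subG i hi).neg) hε
  calc P.real {ω | ε ≤ |∑ i ∈ range n, X i ω|}
      ≤ P.real ({ω | ε ≤ ∑ i ∈ range n, X i ω} ∪ {ω | ε ≤ ∑ i ∈ range n, -X i ω}) := by
        refine measureReal_mono fun ω hω ↦ ?_
        rcases le_abs'.mp (Set.mem_ofPred.mp hω) with h | h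
        · exact .inr (by simpa [sum_neg_distrib] using le_neg_of_le_neg h)
        · exact .inl h
    _ ≤ 2 * exp (-ε ^ 2 / (2 * n * c)) := by
        grw [measureReal_union_le, h_upper, h_lower]
        exact (two_mul _).ge

lemma hasSubgaussianMGF_sub_of_map_eq_gaussianReal [IsProbabilityMeasure P] {X : Ω → ℝ} {m : ℝ}
    {v : ℝ≥0} (hX : P.map X = gaussianReal m v) :
    HasSubgaussianMGF (fun ω ↦ X ω - m) v P := by
  have hX_meas : AEMeasurable X P := .of_map_ne_zero (by simp [hX, NeZero.ne])
  have h_centered : P.map (fun ω ↦ X ω - m) = gaussianReal 0 v := by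
    change P.map ((· - m) ∘ X) = _
    rw [← AEMeasurable.map_map_of_aemeasurable (by fun_prop) hX_meas, hX,
      gaussianReal_map_sub_const, sub_self]
  refine ⟨fun t ↦ ?_, fun t ↦ ?_⟩
  · rw [← mgf_pos_iff, mgf_gaussianReal h_centered]
    positivity
  · simp [mgf_gaussianReal h_centered]

lemma measureReal_abs_mean_sub_ge_le_of_gaussianReal {X : ℕ → Ω → ℝ} (h_indep : iIndepFun X P)
    {m : ℝ} {v : ℝ≥0} {n : ℕ} (hn : 0 < n) (hX : ∀ i < n, P.map (X i) = gaussianReal m v)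
    {κ : ℝ} (hκ : 0 ≤ κ) :
    P.real {ω | κ ≤ |(∑ i ∈ range n, X i ω) / n - m|} ≤ 2 * exp (-(n * κ ^ 2 / (2 * v))) := by
  have := h_indep.isProbabilityMeasure
  have hn' : (0 : ℝ) < n := Nat.cast_pos.mpr hn
  have h_event : {ω | κ ≤ |(∑ i ∈ range n, X i ω) / n - m|}
      = {ω | n * κ ≤ |∑ i ∈ range n, (X i ω - m)|} := by
    ext ω
    have h_mean : (∑ i ∈ range n, X i ω) / n - m = (∑ i ∈ range n, (X i ω - m)) / n := by
      rw [sum_sub_distrib, sum_const, card_range, nsmul_eq_mul]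
      field_simp
    rw [Set.mem_ofPred, Set.mem_ofPred, h_mean, abs_div, abs_of_pos hn', le_div_iff₀' hn']
  have h_centered : iIndepFun (fun i ω ↦ X i ω - m) P :=
    h_indep.comp (fun _ x ↦ x - m) fun _ ↦ measurable_sub_const m
  rw [h_event]
  convert measureReal_abs_sum_range_ge_le h_centered (ε := n * κ)
    (fun i hi ↦ hasSubgaussianMGF_sub_of_map_eq_gaussianReal (hX i hi)) (by positivity) using 3
  rw [show (2 : ℝ) * n * v = n * (2 * v) by ring, mul_pow, sq (n : ℝ), mul_assoc, neg_div,
    mul_div_mul_left _ _ hn'.ne']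

lemma measureReal_abs_mean_Icc_sub_ge_le_of_gaussianReal {X : ℕ → Ω → ℝ}
    (h_indep : iIndepFun (fun i : {i : ℕ // 1 ≤ i} ↦ X i) P) {m : ℝ} {v : ℝ≥0}
    (hX : ∀ i, 1 ≤ i → P.map (X i) = gaussianReal m v) {n : ℕ} (hn : 0 < n) {κ : ℝ}
    (hκ : 0 ≤ κ) :
    P.real {ω | κ ≤ |(∑ i ∈ Icc 1 n, X i ω) / n - m|} ≤ 2 * exp (-(n * κ ^ 2 / (2 * v))) := by
  have h_shift (ω : Ω) : ∑ i ∈ Icc 1 n, X i ω = ∑ i ∈ range n, X (i + 1) ω := by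
    rw [range_eq_Ico, sum_Ico_add' (X · ω) 0 n 1]
    rfl
  simp_rw [h_shift]
  refine measureReal_abs_mean_sub_ge_le_of_gaussianReal ?_ hn (fun i _ ↦ hX _ le_add_self) hκ
  exact h_indep.precomp (g := fun i ↦ ⟨i + 1, le_add_self⟩) fun i j h ↦ by simpa using h

lemma measureReal_iUnion_abs_mean_Icc_sub_ge_le_of_gaussianReal {α : Type*} [Fintype α]
    {Y : α → ℕ → Ω → ℝ} (h_indep : iIndepFun (fun p : α × {n : ℕ // 1 ≤ n} ↦ Y p.1 p.2) P)
    {m : α → ℝ} {v : ℝ≥0} (hY : ∀ a n, 1 ≤ n → P.map (Y a n) = gaussianReal (m a) v)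
    {S : Finset ℕ} (hS : ∀ n ∈ S, 0 < n) {κ : ℝ} (hκ : 0 ≤ κ) :
    P.real (⋃ a, ⋃ n ∈ S, {ω | κ ≤ |(∑ i ∈ Icc 1 n, Y a i ω) / n - m a|})
      ≤ Fintype.card α * (2 * ∑ n ∈ S, exp (-(n * (κ ^ 2 / (2 * v))))) := by
  calc _ ≤ ∑ a, ∑ n ∈ S, P.real {ω | κ ≤ |(∑ i ∈ Icc 1 n, Y a i ω) / n - m a|} :=
        (measureReal_iUnion_fintype_le _).trans
          (sum_le_sum fun a _ ↦ measureReal_biUnion_finset_le _ _)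
    _ ≤ ∑ _a : α, ∑ n ∈ S, 2 * exp (-(n * (κ ^ 2 / (2 * v)))) := by
        gcongr with a _ n hn
        rw [← mul_div_assoc]
        exact measureReal_abs_mean_Icc_sub_ge_le_of_gaussianReal
          (h_indep.precomp (g := fun i ↦ (a, i)) fun i j h ↦ (Prod.mk.inj h).2)
          (hY a) (hS n hn) hκ
    _ = _ := by simp [mul_sum]

end Hoeffding

lemma sum_exp_neg_nat_mul_le {x : ℝ} (hx : 0 < x) {c : ℝ} {s : Finset ℕ}
    (hs : ∀ n ∈ s, c ≤ n) :
    ∑ n ∈ s, exp (-(n * x)) ≤ exp (x - c * x) / x := by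
  set r := exp (-x) with hr_def
  have hr : r < 1 := exp_lt_one_iff.mpr (neg_lt_zero.mpr hx)
  have h_pow (n : ℕ) : exp (-(n * x)) = r ^ n := by rw [← exp_nat_mul, mul_neg]
  have h_sub : s ⊆ Ico ⌈c⌉₊ (s.sup id + 1) := fun n hn ↦
    mem_Ico.mpr ⟨Nat.ceil_le.mpr (hs n hn), Nat.lt_succ_of_le (le_sup (f := id) hn)⟩
  have h_gap : x * r ≤ 1 - r := by
    have := mul_le_mul_of_nonneg_right (add_one_le_exp x) (exp_pos (-x)).le
    rw [← exp_add, add_neg_cancel, exp_zero, add_one_mul] at this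
    linarith
  calc ∑ n ∈ s, exp (-(n * x)) = ∑ n ∈ s, r ^ n := sum_congr rfl fun n _ ↦ h_pow n
    _ ≤ ∑ n ∈ Ico ⌈c⌉₊ (s.sup id + 1), r ^ n :=
        sum_le_sum_of_subset_of_nonneg h_sub fun n _ _ ↦ by positivity
    _ ≤ r ^ ⌈c⌉₊ / (1 - r) := geom_sum_Ico_le_of_lt_one (by positivity) hr
    _ ≤ exp (-(c * x)) / (x * r) := by
        gcongr
        · rw [← h_pow, exp_le_exp, neg_le_neg_iff]
          exact mul_le_mul_of_nonneg_right (Nat.le_ceil c) hx.le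
    _ = exp (x - c * x) / x := by
        rw [sub_eq_neg_add, exp_add, div_mul_eq_div_div_swap, div_eq_mul_inv _ r, hr_def,
          exp_neg x, inv_inv]

lemma div_four_le_natFloor {y : ℝ} (hy : 1 ≤ y) : y / 4 ≤ ⌊y⌋₊ := by
  have h_one : (1 : ℝ) ≤ ⌊y⌋₊ := by exact_mod_cast (Nat.one_le_floor_iff y).mpr hy
  have h_sub := Nat.sub_one_lt_floor y
  rcases le_total y 4 with h | h <;> linarith

lemma rpow_eighth_div_two_le_sqrt_of_natFloor_le {T : ℝ} (hT : 1 ≤ T) {t : ℕ}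
    (ht : ⌊T ^ (1 / 4 : ℝ)⌋₊ ≤ t) : T ^ (1 / 8 : ℝ) / 2 ≤ √t := by
  have h_sqrt : T ^ (1 / 8 : ℝ) = √(T ^ (1 / 4 : ℝ)) := by
    rw [sqrt_eq_rpow, ← rpow_mul (by linarith)]
    norm_num
  calc T ^ (1 / 8 : ℝ) / 2 = √(T ^ (1 / 4 : ℝ) / 4) := by
        rw [h_sqrt, sqrt_div' _ (by norm_num : (0 : ℝ) ≤ 4),
          show (4 : ℝ) = 2 ^ 2 by norm_num, sqrt_sq (by norm_num)]
    _ ≤ √⌊T ^ (1 / 4 : ℝ)⌋₊ := sqrt_le_sqrt (div_four_le_natFloor (one_le_rpow hT (by norm_num)))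
    _ ≤ √t := sqrt_le_sqrt (by exact_mod_cast ht)

lemma ae_le_iUnion_abs_mean_Icc_sub_ge {Ω α : Type*} {mΩ : MeasurableSpace Ω} {P : Measure Ω}
    {Y : α → ℕ → Ω → ℝ} {m : α → ℝ} {N : α → ℕ → Ω → ℕ} {K : ℝ} (hK : 0 < K)
    (hN : ∀ᵐ ω ∂P, ∀ a t, 1 ≤ t →
      1 ≤ N a t ω ∧ N a t ω ≤ t ∧ √t / (4 * K) - 2 * K ≤ (N a t ω : ℝ))
    {κ : ℝ} {T : ℕ} (hT : 1 ≤ T) :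
    {ω | ∃ t, ⌊(T : ℝ) ^ ((1 : ℝ) / 4)⌋₊ ≤ t ∧ t ≤ T ∧ ∃ a,
        κ ≤ |(∑ i ∈ Icc 1 (N a t ω), Y a i ω) / (N a t ω : ℝ) - m a|}
      ≤ᵐ[P] ⋃ a, ⋃ n ∈ (Icc 1 T).filter
          fun n : ℕ ↦ (T : ℝ) ^ ((1 : ℝ) / 8) / (8 * K) - 2 * K ≤ n,
        {ω | κ ≤ |(∑ i ∈ Icc 1 n, Y a i ω) / n - m a|} := by
  have hT' : (1 : ℝ) ≤ T := by exact_mod_cast hT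
  filter_upwards [hN] with ω hω
  rintro ⟨t, hgt, htT, a, hdev⟩
  have ht : 1 ≤ t := ((Nat.one_le_floor_iff _).mpr (one_le_rpow hT' (by norm_num))).trans hgt
  obtain ⟨hN_pos, hN_le, hN_sqrt⟩ := hω a t ht
  have hc_le : (T : ℝ) ^ ((1 : ℝ) / 8) / (8 * K) - 2 * K ≤ N a t ω := by
    refine le_trans ?_ hN_sqrt
    rw [show (8 : ℝ) * K = 2 * (4 * K) by ring, ← div_div]
    gcongr
    exact rpow_eighth_div_two_le_sqrt_of_natFloor_le hT' hgt
  exact Set.mem_iUnion.mpr ⟨a, Set.mem_iUnion₂.mpr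
    ⟨N a t ω, mem_filter.mpr ⟨mem_Icc.mpr ⟨hN_pos, hN_le.trans htT⟩, hc_le⟩, hdev⟩⟩

theorem stmt7_general (K : ℕ) (hK : 1 ≤ K) (μ : Fin K → ℝ)
    (Ω : Type) [MeasurableSpace Ω] (P : Measure Ω) [IsProbabilityMeasure P]
    (Y : Fin K → ℕ → Ω → ℝ)
    (hYindep : iIndepFun
      (fun p : Fin K × {n : ℕ // 1 ≤ n} => Y p.1 p.2.1) P)
    (hYlaw : ∀ a n, 1 ≤ n → P.map (Y a n) = gaussianReal (μ a) 1)
    (N : Fin K → ℕ → Ω → ℕ)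
    (hN : ∀ᵐ ω ∂P, ∀ a t, 1 ≤ t →
      1 ≤ N a t ω ∧ N a t ω ≤ t ∧ Real.sqrt t / (4 * K) - 2 * K ≤ (N a t ω : ℝ))
    (κ : ℝ) (hκ : 0 < κ) (T : ℕ) (hT : 4 ≤ T) :
    P {ω | ∃ t, ⌊(T : ℝ) ^ ((1 : ℝ) / 4)⌋₊ ≤ t ∧ t ≤ T ∧ ∃ a,
        κ ≤ |(∑ m ∈ Finset.Icc 1 (N a t ω), Y a m ω) / (N a t ω : ℝ) - μ a|} ≤
      ENNReal.ofReal ((4 * K / κ ^ 2) * Real.exp ((2 * K + 1) * κ ^ 2 / 2) * T *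
        Real.exp (-(κ ^ 2 / (16 * K)) * (T : ℝ) ^ ((1 : ℝ) / 8))) := by
  have hK' : (0 : ℝ) < K := Nat.cast_pos.mpr hK
  set x : ℝ := κ ^ 2 / 2 with hx
  set c : ℝ := (T : ℝ) ^ ((1 : ℝ) / 8) / (8 * K) - 2 * K with hc
  have h_union := measureReal_iUnion_abs_mean_Icc_sub_ge_le_of_gaussianReal hYindep hYlaw
    (S := (Icc 1 T).filter fun n : ℕ ↦ c ≤ n) (fun n hn ↦ (mem_Icc.mp (mem_filter.mp hn).1).1)
    hκ.le
  have h_geom := sum_exp_neg_nat_mul_le (x := x) (by positivity)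
    (s := (Icc 1 T).filter fun n : ℕ ↦ c ≤ n) fun n hn ↦ (mem_filter.mp hn).2
  have h_exponent : x - c * x
      = (2 * K + 1) * κ ^ 2 / 2 + -(κ ^ 2 / (16 * K)) * (T : ℝ) ^ ((1 : ℝ) / 8) := by
    rw [hx, hc]
    field_simp
    ring
  rw [NNReal.coe_one, mul_one, Fintype.card_fin] at h_union
  grw [measure_mono_ae (ae_le_iUnion_abs_mean_Icc_sub_ge hK' hN (by omega)),
    ← ofReal_measureReal, h_union, h_geom, h_exponent, exp_add]
  refine ENNReal.ofReal_le_ofReal ?_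
  calc _ = (4 * K / κ ^ 2) * exp ((2 * K + 1) * κ ^ 2 / 2) * 1 *
        exp (-(κ ^ 2 / (16 * K)) * (T : ℝ) ^ ((1 : ℝ) / 8)) := by
        rw [hx]
        field_simp
        norm_num
    _ ≤ _ := by gcongr; exact_mod_cast (by omega : 1 ≤ T)

/-- concentration of the empirical means under forced exploration. -/
theorem stmt7 (K : ℕ) (hK : 1 ≤ K) (μ : Fin K → ℝ)
    (Ω : Type) [MeasurableSpace Ω] (P : Measure Ω) [IsProbabilityMeasure P]
    (Y : Fin K → ℕ → Ω → ℝ)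
    (hYmeas : ∀ a n, Measurable (Y a n))
    (hYindep : iIndepFun
      (fun p : Fin K × {n : ℕ // 1 ≤ n} => Y p.1 p.2.1) P)
    (hYlaw : ∀ a n, 1 ≤ n → P.map (Y a n) = gaussianReal (μ a) 1)
    (N : Fin K → ℕ → Ω → ℕ)
    (hNmeas : ∀ a t, Measurable (N a t))
    (hN : ∀ᵐ ω ∂P, ∀ a t, 1 ≤ t →
      1 ≤ N a t ω ∧ N a t ω ≤ t ∧ Real.sqrt t / (4 * K) - 2 * K ≤ (N a t ω : ℝ))
    (κ : ℝ) (hκ : 0 < κ) (T : ℕ) (hT : 4 ≤ T) :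
    P {ω | ∃ t, ⌊(T : ℝ) ^ ((1 : ℝ) / 4)⌋₊ ≤ t ∧ t ≤ T ∧ ∃ a,
        κ ≤ |(∑ m ∈ Finset.Icc 1 (N a t ω), Y a m ω) / (N a t ω : ℝ) - μ a|} ≤
      ENNReal.ofReal ((4 * K / κ ^ 2) * Real.exp ((2 * K + 1) * κ ^ 2 / 2) * T *
        Real.exp (-(κ ^ 2 / (16 * K)) * (T : ℝ) ^ ((1 : ℝ) / 8))) :=
  stmt7_general K hK μ Ω P Y hYindep hYlaw N hN κ hκ T hT
end

section
/- Regret bound for the exponential weights (online lazy mirror ascent): Let K ≥ 1, T ≥ 1, let (C_t)_{t=1}^T be nonnegative reals, let (f_t)_{t=1}^T be vectors in ℝ^K with 0 ≤ f_{t,a} ≤ C_t for all t and a, and let (η_t)_{t=1}^T be positive and non-increasing. Let (w_t) be the exponential weights iterates. Then for every w* ∈ Σ_K: Σ_{t=1}^T f_t·(w* − w_t) ≤ log(K)/η_T + Σ_{t=1}^T 2·η_t·C_t². -/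
/-! The potential `Φ_η(G) = η⁻¹ log (K⁻¹ ∑ₐ exp (η Gₐ))` of the cumulative gains dominates
`⟨w*, G⟩ - log K / η`. Adding the gain `f_t` raises `Φ_{η_t}` by at most
`⟨w_t, f_t⟩ + 2 η_t C_t²`, and since `Φ_η(G)` is nondecreasing in `η` (Jensen for the concave
`x ↦ x ^ p`, `p ≤ 1`), lowering the learning rate between rounds never increases it.
Telescoping over the rounds gives the regret bound. -/

open Finset Real

section ExponentialWeights

variable {ι : Type*} [Fintype ι]

noncomputable def softmax (x : ι → ℝ) (a : ι) : ℝ :=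
  exp (x a) / ∑ b, exp (x b)

theorem sum_exp_pos [Nonempty ι] (x : ι → ℝ) : 0 < ∑ a, exp (x a) :=
  sum_pos (fun a _ => exp_pos (x a)) univ_nonempty

theorem softmax_mem_stdSimplex [Nonempty ι] (x : ι → ℝ) : softmax x ∈ stdSimplex ℝ ι :=
  ⟨fun a => div_nonneg (exp_pos _).le (sum_exp_pos x).le, by
    simp only [softmax, ← sum_div, div_self (sum_exp_pos x).ne']⟩

theorem log_sum_mul_exp_le {w y : ι → ℝ} {c : ℝ} (hw : w ∈ stdSimplex ℝ ι)
    (hy : ∀ a, 0 ≤ y a ∧ y a ≤ c) :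
    log (∑ a, w a * exp (y a)) ≤ ∑ a, w a * y a + 2 * c ^ 2 := by
  set m := ∑ a, w a * y a
  have hm : 0 ≤ m := sum_nonneg fun a _ => mul_nonneg (hw.1 a) (hy a).1
  have hpos : 0 < ∑ a, w a * exp (y a) :=
    calc (0 : ℝ) < ∑ a, w a * 1 := by simp [hw.2]
      _ ≤ _ := sum_le_sum fun a _ => mul_le_mul_of_nonneg_left (one_le_exp (hy a).1) (hw.1 a)
  rw [log_le_iff_le_exp hpos]
  rcases le_or_gt c 1 with hc | hc
  · have hquad : ∀ a, exp (y a) ≤ y a + c ^ 2 + 1 := fun a => by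
      have h := abs_le.1 (abs_exp_sub_one_sub_id_le (x := y a)
        (abs_le.2 ⟨by linarith [(hy a).1], (hy a).2.trans hc⟩))
      nlinarith [(hy a).1, (hy a).2]
    calc ∑ a, w a * exp (y a) ≤ ∑ a, w a * (y a + c ^ 2 + 1) :=
          sum_le_sum fun a _ => mul_le_mul_of_nonneg_left (hquad a) (hw.1 a)
      _ = m + c ^ 2 + 1 := by
        simp only [mul_add, sum_add_distrib, ← sum_mul, hw.2, mul_one, one_mul, m]
      _ ≤ exp (m + c ^ 2) := add_one_le_exp _
      _ ≤ exp (m + 2 * c ^ 2) := exp_le_exp.2 (by nlinarith)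
  -- for `c > 1` the crude bound `exp y ≤ exp c` suffices, since `c ≤ 2 c²`
  · calc ∑ a, w a * exp (y a) ≤ ∑ a, w a * exp c :=
          sum_le_sum fun a _ => mul_le_mul_of_nonneg_left (exp_le_exp.2 (hy a).2) (hw.1 a)
      _ = exp c := by rw [← sum_mul, hw.2, one_mul]
      _ ≤ exp (m + 2 * c ^ 2) := exp_le_exp.2 (by nlinarith)

theorem log_sum_exp_add_le [Nonempty ι] (x g : ι → ℝ) {c : ℝ}
    (hg : ∀ a, 0 ≤ g a ∧ g a ≤ c) :
    log (∑ a, exp (x a + g a)) ≤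
      log (∑ a, exp (x a)) + ∑ a, g a * softmax x a + 2 * c ^ 2 := by
  have hfactor :
      ∑ a, exp (x a + g a) = (∑ b, exp (x b)) * ∑ a, softmax x a * exp (g a) := by
    rw [mul_sum]
    refine sum_congr rfl fun a _ => ?_
    rw [softmax, exp_add]
    field_simp [(sum_exp_pos x).ne']
  have hS : 0 < ∑ a, softmax x a * exp (g a) :=
    sum_pos (fun a _ => mul_pos (div_pos (exp_pos _) (sum_exp_pos x)) (exp_pos _))
      univ_nonempty
  rw [hfactor, log_mul (sum_exp_pos x).ne' hS.ne', add_assoc]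
  simpa only [mul_comm (g _)] using
    add_le_add_right (log_sum_mul_exp_le (softmax_mem_stdSimplex x) hg) _

theorem log_sum_exp_mul_sub_log_card_le [Nonempty ι] (x : ι → ℝ) {p : ℝ} (hp₀ : 0 ≤ p)
    (hp₁ : p ≤ 1) :
    log (∑ a, exp (p * x a)) - log (Fintype.card ι) ≤
      p * (log (∑ a, exp (x a)) - log (Fintype.card ι)) := by
  have hK : (0 : ℝ) < Fintype.card ι := Nat.cast_pos.2 Fintype.card_pos
  have hjensen := (concaveOn_rpow hp₀ hp₁).le_map_sum (t := univ)
    (w := fun _ => ((Fintype.card ι : ℝ))⁻¹) (p := fun a => exp (x a))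
    (fun _ _ => inv_nonneg.2 hK.le) (by simp [hK.ne']) (fun a _ => (exp_pos (x a)).le)
  simp only [smul_eq_mul, ← mul_sum, ← exp_mul, mul_comm (x _) p] at hjensen
  have := log_le_log (by positivity) hjensen
  rw [log_mul (inv_pos.2 hK).ne' (sum_exp_pos _).ne', log_rpow (by positivity),
    log_mul (inv_pos.2 hK).ne' (sum_exp_pos _).ne', log_inv] at this
  linarith

noncomputable def expPotential (η : ℝ) (G : ι → ℝ) : ℝ :=
  (log (∑ a, exp (η * G a)) - log (Fintype.card ι)) / η

theorem expPotential_zero_right (η : ℝ) : expPotential η (0 : ι → ℝ) = 0 := by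
  simp [expPotential]

theorem expPotential_le_of_le [Nonempty ι] (G : ι → ℝ) {η η' : ℝ} (hη' : 0 < η')
    (h : η' ≤ η) :
    expPotential η' G ≤ expPotential η G := by
  have hη : 0 < η := hη'.trans_le h
  have := log_sum_exp_mul_sub_log_card_le (fun a => η * G a) (div_pos hη' hη).le
    ((div_le_one hη).2 h)
  simp only [← mul_assoc, div_mul_cancel₀ _ hη.ne'] at this
  rw [expPotential, expPotential, div_le_iff₀ hη']
  calc _ ≤ η' / η * (log (∑ a, exp (η * G a)) - log (Fintype.card ι)) := this
    _ = _ := by ring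

theorem expPotential_add_le [Nonempty ι] {η c : ℝ} (hη : 0 < η) (G g : ι → ℝ)
    (hg : ∀ a, 0 ≤ g a ∧ g a ≤ c) :
    expPotential η (G + g) ≤
      expPotential η G + ∑ a, g a * softmax (fun b => η * G b) a + 2 * η * c ^ 2 := by
  have h := log_sum_exp_add_le (fun b => η * G b) (fun b => η * g b) (c := η * c)
    fun a => ⟨mul_nonneg hη.le (hg a).1, mul_le_mul_of_nonneg_left (hg a).2 hη.le⟩
  simp only [← mul_sum, mul_assoc] at h
  calc expPotential η (G + g)
        = (log (∑ a, exp (η * G a + η * g a)) - log (Fintype.card ι)) / η := by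
          simp only [expPotential, Pi.add_apply, mul_add]
    _ ≤ (log (∑ a, exp (η * G a)) + η * ∑ a, g a * softmax (fun b => η * G b) a
          + 2 * (η * c) ^ 2 - log (Fintype.card ι)) / η := by gcongr
    _ = _ := by rw [expPotential]; field_simp; ring

theorem sum_mul_le_expPotential_add {η : ℝ} (hη : 0 < η) (G : ι → ℝ) {w : ι → ℝ}
    (hw : w ∈ stdSimplex ℝ ι) :
    ∑ a, w a * G a ≤ expPotential η G + log (Fintype.card ι) / η := by
  have hmax : ∀ a, G a ≤ expPotential η G + log (Fintype.card ι) / η := fun a => by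
    have h := log_le_log (exp_pos _)
      (single_le_sum (f := fun b => exp (η * G b)) (fun b _ => (exp_pos _).le) (mem_univ a))
    rw [log_exp] at h
    rw [expPotential, ← add_div, le_div_iff₀ hη]
    linarith
  calc ∑ a, w a * G a ≤ ∑ a, w a * (expPotential η G + log (Fintype.card ι) / η) :=
        sum_le_sum fun a _ => mul_le_mul_of_nonneg_left (hmax a) (hw.1 a)
    _ = _ := by rw [← sum_mul, hw.2, one_mul]

end ExponentialWeights

section CumulativeGain

variable {ι : Type*}

def cumulativeGain (f : ℕ → ι → ℝ) (t : ℕ) (a : ι) : ℝ :=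
  ∑ s ∈ Icc 1 t, f s a

theorem cumulativeGain_zero (f : ℕ → ι → ℝ) : cumulativeGain f 0 = 0 := by
  ext a; simp [cumulativeGain]

theorem cumulativeGain_eq_add {t : ℕ} (f : ℕ → ι → ℝ) (ht : 1 ≤ t) :
    cumulativeGain f t = cumulativeGain f (t - 1) + f t := by
  obtain ⟨n, rfl⟩ := Nat.exists_eq_add_of_le' ht
  ext a
  simp [cumulativeGain, sum_Icc_succ_top (Nat.le_add_left 1 n)]

theorem sum_Icc_sum_mul_eq_sum_mul_cumulativeGain [Fintype ι] (f : ℕ → ι → ℝ) (T : ℕ)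
    (v : ι → ℝ) :
    ∑ t ∈ Icc 1 T, ∑ a, f t a * v a = ∑ a, v a * cumulativeGain f T a := by
  rw [sum_comm]
  refine sum_congr rfl fun a _ => ?_
  rw [cumulativeGain, mul_sum]
  exact sum_congr rfl fun t _ => mul_comm _ _

end CumulativeGain

theorem sub_le_sum_Icc_of_sub_le {Φ δ : ℕ → ℝ} {T : ℕ}
    (h : ∀ t ∈ Icc 1 T, Φ t - Φ (t - 1) ≤ δ t) : Φ T - Φ 0 ≤ ∑ t ∈ Icc 1 T, δ t := by
  induction T with
  | zero => simp
  | succ T ih =>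
    rw [sum_Icc_succ_top (Nat.le_add_left 1 T)]
    have hT := h (T + 1) (mem_Icc.2 ⟨Nat.le_add_left 1 T, le_rfl⟩)
    have := ih fun t ht => h t (Icc_subset_Icc_right (Nat.le_succ T) ht)
    simp only [Nat.add_sub_cancel] at hT
    linarith

theorem stmt8_general (K T : ℕ) (hK : 1 ≤ K) (hT : 1 ≤ T)
    (C : ℕ → ℝ)
    (f : ℕ → Fin K → ℝ)
    (hf : ∀ t, 1 ≤ t → t ≤ T → ∀ a, 0 ≤ f t a ∧ f t a ≤ C t)
    (η : ℕ → ℝ) (hη : ∀ t, 1 ≤ t → t ≤ T → 0 < η t)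
    (hmono : ∀ s t, 1 ≤ s → s ≤ t → t ≤ T → η t ≤ η s)
    (w : ℕ → Fin K → ℝ)
    (hw : ∀ t a, 1 ≤ t → t ≤ T → w t a =
      Real.exp (η t * ∑ s ∈ Finset.Icc 1 (t - 1), f s a) /
        ∑ b, Real.exp (η t * ∑ s ∈ Finset.Icc 1 (t - 1), f s b))
    (wstar : Fin K → ℝ) (hws : wstar ∈ stdSimplex ℝ (Fin K)) :
    ∑ t ∈ Finset.Icc 1 T, ∑ a, f t a * (wstar a - w t a) ≤
      Real.log K / η T + ∑ t ∈ Finset.Icc 1 T, 2 * η t * C t ^ 2 := by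
  have : Nonempty (Fin K) := ⟨⟨0, hK⟩⟩
  set G := cumulativeGain f
  have hstep : ∀ t ∈ Icc 1 T,
      expPotential (η t) (G t) - expPotential (η (t - 1)) (G (t - 1)) ≤
        ∑ a, f t a * w t a + 2 * η t * C t ^ 2 := by
    intro t ht
    obtain ⟨ht₁, htT⟩ := mem_Icc.1 ht
    have hlazy : expPotential (η t) (G (t - 1)) ≤ expPotential (η (t - 1)) (G (t - 1)) := by
      rcases ht₁.eq_or_lt with rfl | ht₂
      · simp only [G, Nat.sub_self, cumulativeGain_zero, expPotential_zero_right, le_refl]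
      · exact expPotential_le_of_le _ (hη t ht₁ htT)
          (hmono (t - 1) t (by omega) (by omega) htT)
    have hgain := expPotential_add_le (hη t ht₁ htT) (G (t - 1)) (f t) (hf t ht₁ htT)
    rw [← cumulativeGain_eq_add f ht₁] at hgain
    have hsoftmax : ∀ a, softmax (fun b => η t * G (t - 1) b) a = w t a :=
      fun a => (hw t a ht₁ htT).symm
    simp only [hsoftmax] at hgain
    linarith
  have hpotential := sub_le_sum_Icc_of_sub_le hstep
  have hcompare := sum_mul_le_expPotential_add (hη T hT le_rfl) (G T) hws
  simp only [G, cumulativeGain_zero, expPotential_zero_right, Fintype.card_fin, sub_zero,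
    sum_add_distrib] at hpotential hcompare
  simp only [mul_sub, sum_sub_distrib, sum_Icc_sum_mul_eq_sum_mul_cumulativeGain]
  linarith

/-- regret bound for the exponential weights (online lazy mirror ascent). -/
theorem stmt8 (K T : ℕ) (hK : 1 ≤ K) (hT : 1 ≤ T)
    (C : ℕ → ℝ) (hC : ∀ t, 1 ≤ t → t ≤ T → 0 ≤ C t)
    (f : ℕ → Fin K → ℝ)
    (hf : ∀ t, 1 ≤ t → t ≤ T → ∀ a, 0 ≤ f t a ∧ f t a ≤ C t)
    (η : ℕ → ℝ) (hη : ∀ t, 1 ≤ t → t ≤ T → 0 < η t)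
    (hmono : ∀ s t, 1 ≤ s → s ≤ t → t ≤ T → η t ≤ η s)
    (w : ℕ → Fin K → ℝ)
    (hw : ∀ t a, 1 ≤ t → t ≤ T → w t a =
      Real.exp (η t * ∑ s ∈ Finset.Icc 1 (t - 1), f s a) /
        ∑ b, Real.exp (η t * ∑ s ∈ Finset.Icc 1 (t - 1), f s b))
    (wstar : Fin K → ℝ) (hws : wstar ∈ stdSimplex ℝ (Fin K)) :
    ∑ t ∈ Finset.Icc 1 T, ∑ a, f t a * (wstar a - w t a) ≤
      Real.log K / η T + ∑ t ∈ Finset.Icc 1 T, 2 * η t * C t ^ 2 :=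
  stmt8_general K T hK hT C f hf η hη hmono w hw wstar hws
end

section
/- Mixture martingale for the method of mixtures: In the bandit model with K arms, set S_{t,a} = Σ_{1≤s≤t : A_s=a} η_s and N_a(t) = #{1 ≤ s ≤ t : A_s = a}. For any probability measure ρ on ℝ^K, define M_t = ∫_{ℝ^K} exp( Σ_{a=1}^K λ_a·S_{t,a} − Σ_{a=1}^K N_a(t)·λ_a²/2 ) dρ(λ) for t ≥ 0 (so M_0 = 1). Then (M_t)_{t≥0} is a martingale with respect to the filtration (ℱ_t), and E[M_t] = 1 for every t ≥ 0. -/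
/-!
Grouped by rounds instead of arms, the integrand for a fixed `λ` is
`∏_{s ≤ t} exp (λ_{A s} η_s - λ_{A s}² / 2)`. The arm `A (t + 1)` is `ℱ t`-measurable and
`η (t + 1)` is a standard Gaussian independent of `ℱ t`, so the new factor integrates to
`E[exp (c η - c² / 2)] = 1` against every `ℱ t`-measurable weight: each integrand is a nonnegative
martingale. By nonnegativity, Tonelli exchanges the `ρ`-mixture with the integrals over sets of
`ℱ t`, so the mixture is a martingale as well, and `M 0 = 1` gives `E[M t] = 1`.
-/

open MeasureTheory ProbabilityTheory
open scoped ENNReal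

theorem Finset.sum_fiberwise_dep {ι κ M : Type*} [AddCommMonoid M] [Fintype κ] [DecidableEq κ]
    (s : Finset ι) (g : ι → κ) (f : κ → ι → M) :
    ∑ j, ∑ i ∈ s with g i = j, f j i = ∑ i ∈ s, f (g i) i := by
  rw [← Finset.sum_fiberwise s g fun i => f (g i) i]
  exact Finset.sum_congr rfl fun j _ => Finset.sum_congr rfl fun i hi => by
    rw [(Finset.mem_filter.1 hi).2]

theorem lintegral_exp_mul_sub_sq_half_gaussianReal (c : ℝ) :
    ∫⁻ x, ENNReal.ofReal (Real.exp (c * x - c ^ 2 / 2)) ∂gaussianReal 0 1 = 1 := by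
  have hint : Integrable (fun x => Real.exp (c * x - c ^ 2 / 2)) (gaussianReal 0 1) := by
    simpa only [Real.exp_sub] using (integrable_exp_mul_gaussianReal c).div_const _
  rw [← ofReal_integral_eq_lintegral_ofReal hint (ae_of_all _ fun _ => (Real.exp_pos _).le)]
  have hmgf := congrFun (mgf_id_gaussianReal (μ := 0) (v := 1)) c
  simp only [mgf, id] at hmgf
  simp [Real.exp_sub, integral_div, hmgf]

theorem lintegral_mul_comp_of_indepFun {Ω β γ : Type*} {mΩ : MeasurableSpace Ω}
    [MeasurableSpace β] [MeasurableSpace γ] {P : Measure Ω} [IsFiniteMeasure P]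
    {X : Ω → ℝ≥0∞} {Y : Ω → β} {Z : Ω → γ} {φ : β → γ → ℝ≥0∞}
    (hX : Measurable X) (hY : Measurable Y) (hZ : Measurable Z)
    (hφ : Measurable (Function.uncurry φ))
    (hind : IndepFun (fun ω => (X ω, Y ω)) Z P) (hφ_one : ∀ b, ∫⁻ z, φ b z ∂(P.map Z) = 1) :
    ∫⁻ ω, X ω * φ (Y ω) (Z ω) ∂P = ∫⁻ ω, X ω ∂P := by
  have hW : Measurable fun ω => (X ω, Y ω) := hX.prodMk hY
  have hF : Measurable fun p : (ℝ≥0∞ × β) × γ => p.1.1 * φ p.1.2 p.2 :=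
    (measurable_fst.comp measurable_fst).mul
      (hφ.comp ((measurable_snd.comp measurable_fst).prodMk measurable_snd))
  calc ∫⁻ ω, X ω * φ (Y ω) (Z ω) ∂P
      = ∫⁻ p, p.1.1 * φ p.1.2 p.2 ∂(P.map fun ω => ((X ω, Y ω), Z ω)) :=
        (lintegral_map hF (hW.prodMk hZ)).symm
    _ = ∫⁻ w, ∫⁻ z, w.1 * φ w.2 z ∂(P.map Z) ∂(P.map fun ω => (X ω, Y ω)) := by
        rw [(indepFun_iff_map_prod_eq_prod_map_map hW.aemeasurable hZ.aemeasurable).mp hind,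
          lintegral_prod _ hF.aemeasurable]
    _ = ∫⁻ w, w.1 ∂(P.map fun ω => (X ω, Y ω)) := by
        refine lintegral_congr fun w => ?_
        rw [lintegral_const_mul _ hφ.of_uncurry_left, hφ_one, mul_one]
    _ = ∫⁻ ω, X ω ∂P := lintegral_map measurable_fst hW

theorem lintegral_ofReal_integral_swap {Ω Λ : Type*} [MeasurableSpace Ω] [MeasurableSpace Λ]
    {P : Measure Ω} [SFinite P] {ρ : Measure Λ} [SFinite ρ] {F : Λ → Ω → ℝ}
    (hF : Measurable fun p : Ω × Λ => F p.2 p.1) (hF_nonneg : ∀ lam ω, 0 ≤ F lam ω)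
    (hF_int : ∀ ω, Integrable (fun lam => F lam ω) ρ) :
    ∫⁻ ω, ENNReal.ofReal (∫ lam, F lam ω ∂ρ) ∂P =
      ∫⁻ lam, ∫⁻ ω, ENNReal.ofReal (F lam ω) ∂P ∂ρ := by
  calc ∫⁻ ω, ENNReal.ofReal (∫ lam, F lam ω ∂ρ) ∂P
      = ∫⁻ ω, ∫⁻ lam, ENNReal.ofReal (F lam ω) ∂ρ ∂P := lintegral_congr fun ω =>
        ofReal_integral_eq_lintegral_ofReal (hF_int ω) (ae_of_all _ fun lam => hF_nonneg lam ω)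
    _ = ∫⁻ lam, ∫⁻ ω, ENNReal.ofReal (F lam ω) ∂P ∂ρ :=
        lintegral_lintegral_swap hF.ennreal_ofReal.aemeasurable

theorem martingale_of_setLIntegral_ofReal_succ_eq {Ω : Type*} {m0 : MeasurableSpace Ω}
    {P : Measure Ω} [IsFiniteMeasure P] {ℱ : Filtration ℕ m0} {M : ℕ → Ω → ℝ}
    (hadapt : StronglyAdapted ℱ M) (hM_nonneg : ∀ t ω, 0 ≤ M t ω)
    (hM0 : ∫⁻ ω, ENNReal.ofReal (M 0 ω) ∂P ≠ ∞)
    (hstep : ∀ t B, MeasurableSet[ℱ t] B →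
      ∫⁻ ω in B, ENNReal.ofReal (M (t + 1) ω) ∂P = ∫⁻ ω in B, ENNReal.ofReal (M t ω) ∂P) :
    Martingale M ℱ P := by
  have hmeas t : AEStronglyMeasurable (M t) P := ((hadapt t).mono (ℱ.le t)).aestronglyMeasurable
  have hmass t : ∫⁻ ω, ENNReal.ofReal (M t ω) ∂P = ∫⁻ ω, ENNReal.ofReal (M 0 ω) ∂P := by
    induction t with
    | zero => rfl
    | succ t ih => simpa [ih] using hstep t Set.univ MeasurableSet.univ
  have hint t : Integrable (M t) P :=
    ⟨hmeas t, (hasFiniteIntegral_iff_ofReal (ae_of_all _ (hM_nonneg t))).mpr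
      (hmass t ▸ hM0.lt_top)⟩
  refine martingale_of_setIntegral_eq_succ hadapt hint fun t B hB => ?_
  rw [integral_eq_lintegral_of_nonneg_ae (ae_of_all _ (hM_nonneg t)) (hmeas t).restrict,
    integral_eq_lintegral_of_nonneg_ae (ae_of_all _ (hM_nonneg (t + 1))) (hmeas (t + 1)).restrict,
    hstep t B hB]

section ExpProcess

variable {Ω ι : Type*} (A : ℕ → Ω → ι) (η : ℕ → Ω → ℝ)

noncomputable def expProcess (t : ℕ) (lam : ι → ℝ) (ω : Ω) : ℝ :=
  Real.exp (∑ s ∈ Finset.Icc 1 t, (lam (A s ω) * η s ω - lam (A s ω) ^ 2 / 2))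

@[simp]
lemma expProcess_zero (lam : ι → ℝ) (ω : Ω) : expProcess A η 0 lam ω = 1 := by
  simp [expProcess]

lemma expProcess_succ (t : ℕ) (lam : ι → ℝ) (ω : Ω) :
    expProcess A η (t + 1) lam ω = expProcess A η t lam ω *
      Real.exp (lam (A (t + 1) ω) * η (t + 1) ω - lam (A (t + 1) ω) ^ 2 / 2) := by
  rw [expProcess, Finset.sum_Icc_succ_top (by omega), Real.exp_add, expProcess]

lemma expProcess_nonneg (t : ℕ) (lam : ι → ℝ) (ω : Ω) : 0 ≤ expProcess A η t lam ω :=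
  Real.exp_nonneg _

lemma expProcess_le (t : ℕ) (lam : ι → ℝ) (ω : Ω) :
    expProcess A η t lam ω ≤ Real.exp (∑ s ∈ Finset.Icc 1 t, η s ω ^ 2 / 2) :=
  Real.exp_le_exp.mpr <| Finset.sum_le_sum fun s _ => by
    nlinarith [sq_nonneg (lam (A s ω) - η s ω)]

lemma expProcess_eq_exp_sum_filter [Fintype ι] [DecidableEq ι] (t : ℕ) (lam : ι → ℝ) (ω : Ω) :
    expProcess A η t lam ω =
      Real.exp ((∑ a, lam a * ∑ s ∈ (Finset.Icc 1 t).filter (fun s => A s ω = a), η s ω)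
        - ∑ a, (((Finset.Icc 1 t).filter fun s => A s ω = a).card : ℝ) * lam a ^ 2 / 2) := by
  simp only [Finset.mul_sum, Finset.card_eq_sum_ones, Nat.cast_sum, Nat.cast_one,
    Finset.sum_mul, Finset.sum_div, one_mul]
  rw [Finset.sum_fiberwise_dep, Finset.sum_fiberwise_dep, ← Finset.sum_sub_distrib, expProcess]

variable [Countable ι]

lemma integrable_expProcess (ρ : Measure (ι → ℝ)) [IsFiniteMeasure ρ] (t : ℕ) (ω : Ω) :
    Integrable (fun lam => expProcess A η t lam ω) ρ := by
  refine (integrable_const (Real.exp (∑ s ∈ Finset.Icc 1 t, η s ω ^ 2 / 2))).mono' ?_ ?_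
  · exact Continuous.aestronglyMeasurable (by unfold expProcess; fun_prop)
  · exact ae_of_all _ fun lam => by
      rw [Real.norm_of_nonneg (expProcess_nonneg A η t lam ω)]
      exact expProcess_le A η t lam ω

variable [MeasurableSpace ι] [MeasurableSingletonClass ι]

lemma measurable_expProcess [m : MeasurableSpace Ω] {t : ℕ}
    (hA : ∀ s ∈ Finset.Icc 1 t, Measurable (A s)) (hη : ∀ s ∈ Finset.Icc 1 t, Measurable (η s)) :
    Measurable fun p : Ω × (ι → ℝ) => expProcess A η t p.2 p.1 := by
  have heval : Measurable fun q : (ι → ℝ) × ι => q.1 q.2 :=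
    measurable_from_prod_countable_left fun a => measurable_pi_apply a
  refine Real.measurable_exp.comp (Finset.measurable_sum _ fun s hs => ?_)
  have hlam : Measurable fun p : Ω × (ι → ℝ) => p.2 (A s p.1) :=
    heval.comp (measurable_snd.prodMk ((hA s hs).comp measurable_fst))
  exact (hlam.mul ((hη s hs).comp measurable_fst)).sub ((hlam.pow_const 2).div_const 2)

theorem stronglyMeasurable_integral_expProcess {m : MeasurableSpace Ω} (ρ : Measure (ι → ℝ))
    [SFinite ρ] {t : ℕ} (hA : ∀ s ∈ Finset.Icc 1 t, Measurable[m] (A s))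
    (hη : ∀ s ∈ Finset.Icc 1 t, Measurable[m] (η s)) :
    StronglyMeasurable[m] fun ω => ∫ lam, expProcess A η t lam ω ∂ρ :=
  (measurable_expProcess A η hA hη).stronglyMeasurable.integral_prod_right'

variable {A η}

theorem setLIntegral_expProcess_succ {m m0 : MeasurableSpace Ω} (hm : m ≤ m0)
    {P : Measure Ω} [IsFiniteMeasure P] {t : ℕ}
    (hA : ∀ s ∈ Finset.Icc 1 t, Measurable[m] (A s)) (hA_succ : Measurable[m] (A (t + 1)))
    (hη : ∀ s ∈ Finset.Icc 1 t, Measurable[m] (η s)) (hη_succ : Measurable (η (t + 1)))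
    (hind : Indep (MeasurableSpace.comap (η (t + 1)) inferInstance) m P)
    (hlaw : P.map (η (t + 1)) = gaussianReal 0 1) (lam : ι → ℝ) {B : Set Ω}
    (hB : MeasurableSet[m] B) :
    ∫⁻ ω in B, ENNReal.ofReal (expProcess A η (t + 1) lam ω) ∂P =
      ∫⁻ ω in B, ENNReal.ofReal (expProcess A η t lam ω) ∂P := by
  set X : Ω → ℝ≥0∞ := B.indicator fun ω => ENNReal.ofReal (expProcess A η t lam ω)
  set φ : ι → ℝ → ℝ≥0∞ := fun a z => ENNReal.ofReal (Real.exp (lam a * z - lam a ^ 2 / 2))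
  have hX : Measurable[m] X :=
    (((measurable_expProcess (m := m) A η hA hη).comp
      (measurable_id.prodMk measurable_const)).ennreal_ofReal).indicator hB
  have hφ : Measurable (Function.uncurry φ) := by
    refine measurable_from_prod_countable_right fun a => ?_
    simp only [φ, Function.uncurry_apply_pair]
    fun_prop
  have hind_XA : IndepFun (fun ω => (X ω, A (t + 1) ω)) (η (t + 1)) P :=
    indep_of_indep_of_le_left hind.symm (hX.prodMk hA_succ).comap_le
  calc ∫⁻ ω in B, ENNReal.ofReal (expProcess A η (t + 1) lam ω) ∂P
      = ∫⁻ ω, X ω * φ (A (t + 1) ω) (η (t + 1) ω) ∂P := by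
        rw [← lintegral_indicator (hm _ hB)]
        refine lintegral_congr fun ω => ?_
        by_cases hω : ω ∈ B
        · simp [X, φ, hω, expProcess_succ, ENNReal.ofReal_mul (expProcess_nonneg A η t lam ω)]
        · simp [X, hω]
    _ = ∫⁻ ω, X ω ∂P :=
        lintegral_mul_comp_of_indepFun (hX.mono hm le_rfl) (hA_succ.mono hm le_rfl) hη_succ hφ
          hind_XA fun a => by rw [hlaw]; exact lintegral_exp_mul_sub_sq_half_gaussianReal (lam a)
    _ = ∫⁻ ω in B, ENNReal.ofReal (expProcess A η t lam ω) ∂P := lintegral_indicator (hm _ hB) _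

end ExpProcess

theorem stmt12_general (K : ℕ)
    (Ω : Type) (m0 : MeasurableSpace Ω) (P : Measure Ω) [IsProbabilityMeasure P]
    (ℱ : Filtration ℕ m0)
    (η : ℕ → Ω → ℝ)
    (hηmeas : ∀ t, 1 ≤ t → Measurable[ℱ t] (η t))
    (hηindep : ∀ t, 1 ≤ t →
      Indep (MeasurableSpace.comap (η t) inferInstance) (ℱ (t - 1)) P)
    (hηlaw : ∀ t, 1 ≤ t → P.map (η t) = gaussianReal 0 1)
    (A : ℕ → Ω → Fin K)
    (hAmeas : ∀ t, 1 ≤ t → Measurable[ℱ (t - 1)] (A t))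
    (ρ : Measure (Fin K → ℝ)) [IsProbabilityMeasure ρ]
    (M : ℕ → Ω → ℝ)
    (hM : ∀ t ω, M t ω = ∫ lam : Fin K → ℝ,
      Real.exp ((∑ a, lam a * ∑ s ∈ (Finset.Icc 1 t).filter (fun s => A s ω = a), η s ω)
        - ∑ a, (((Finset.Icc 1 t).filter fun s => A s ω = a).card : ℝ) * lam a ^ 2 / 2) ∂ρ) :
    Martingale M ℱ P ∧ ∀ t, ∫ ω, M t ω ∂P = 1 := by
  obtain rfl : M = fun t ω => ∫ lam, expProcess A η t lam ω ∂ρ := by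
    ext t ω; simp only [hM, expProcess_eq_exp_sum_filter]
  have hA t : ∀ s ∈ Finset.Icc 1 t, Measurable[ℱ t] (A s) := fun s hs =>
    (hAmeas s (Finset.mem_Icc.1 hs).1).mono (ℱ.mono (by grind)) le_rfl
  have hA_succ t : Measurable[ℱ t] (A (t + 1)) := by simpa using hAmeas (t + 1) (by omega)
  have hη t : ∀ s ∈ Finset.Icc 1 t, Measurable[ℱ t] (η s) := fun s hs =>
    (hηmeas s (Finset.mem_Icc.1 hs).1).mono (ℱ.mono (Finset.mem_Icc.1 hs).2) le_rfl
  have hjoint t := measurable_expProcess A η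
    (fun s hs => (hA t s hs).mono (ℱ.le t) le_rfl) (fun s hs => (hη t s hs).mono (ℱ.le t) le_rfl)
  have hmart : Martingale (fun t ω => ∫ lam, expProcess A η t lam ω ∂ρ) ℱ P := by
    refine martingale_of_setLIntegral_ofReal_succ_eq
      (fun t => stronglyMeasurable_integral_expProcess A η ρ (hA t) (hη t))
      (fun t ω => integral_nonneg fun lam => expProcess_nonneg A η t lam ω) (by simp)
      fun t B hB => ?_
    rw [lintegral_ofReal_integral_swap (hjoint (t + 1)) (expProcess_nonneg A η (t + 1))
        (integrable_expProcess A η ρ (t + 1)),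
      lintegral_ofReal_integral_swap (hjoint t) (expProcess_nonneg A η t)
        (integrable_expProcess A η ρ t)]
    exact lintegral_congr fun lam => setLIntegral_expProcess_succ (ℱ.le t) (hA t) (hA_succ t)
      (hη t) ((hηmeas (t + 1) (by omega)).mono (ℱ.le _) le_rfl)
      (by simpa using hηindep (t + 1) (by omega)) (hηlaw (t + 1) (by omega)) lam hB
  refine ⟨hmart, fun t => ?_⟩
  simpa using (hmart.setIntegral_eq (Nat.zero_le t) MeasurableSet.univ).symm

/-- mixture martingale for the method of mixtures. -/
theorem stmt12 (K : ℕ) (hK : 1 ≤ K)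
    (Ω : Type) (m0 : MeasurableSpace Ω) (P : Measure Ω) [IsProbabilityMeasure P]
    (ℱ : Filtration ℕ m0)
    (η : ℕ → Ω → ℝ)
    (hηmeas : ∀ t, 1 ≤ t → Measurable[ℱ t] (η t))
    (hηindep : ∀ t, 1 ≤ t →
      Indep (MeasurableSpace.comap (η t) inferInstance) (ℱ (t - 1)) P)
    (hηlaw : ∀ t, 1 ≤ t → P.map (η t) = gaussianReal 0 1)
    (A : ℕ → Ω → Fin K)
    (hAmeas : ∀ t, 1 ≤ t → Measurable[ℱ (t - 1)] (A t))
    (hAinit : ∀ s ω, 1 ≤ s → s ≤ K → (A s ω : ℕ) = s - 1)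
    (ρ : Measure (Fin K → ℝ)) [IsProbabilityMeasure ρ]
    (M : ℕ → Ω → ℝ)
    (hM : ∀ t ω, M t ω = ∫ lam : Fin K → ℝ,
      Real.exp ((∑ a, lam a * ∑ s ∈ (Finset.Icc 1 t).filter (fun s => A s ω = a), η s ω)
        - ∑ a, (((Finset.Icc 1 t).filter fun s => A s ω = a).card : ℝ) * lam a ^ 2 / 2) ∂ρ) :
    Martingale M ℱ P ∧ ∀ t, ∫ ω, M t ω ∂P = 1 :=
  stmt12_general K Ω m0 P ℱ η hηmeas hηindep hηlaw A hAmeas ρ M hM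
end

section
/- Gaussian-window lower bound for symmetric unimodal densities: Let g : ℝ → [0,∞) be measurable, even (g(−x) = g(x) for all x), and non-increasing on [0,∞). Then for every m ∈ ℝ and every n > 0: ∫_ℝ e^{−n(λ−m)²/2}·g(λ) dλ ≥ 2·√(2/n)·e^{−1}·g(|m| + √(2/n)), where the integral is the Lebesgue integral of a nonnegative function. -/
open MeasureTheory

/-- Gaussian-window lower bound for symmetric unimodal densities. -/
theorem stmt13 (g : ℝ → ℝ) (hmeas : Measurable g) (hnonneg : ∀ x, 0 ≤ g x)
    (heven : ∀ x, g (-x) = g x) (hmono : AntitoneOn g (Set.Ici (0 : ℝ))) :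
    ∀ (m n : ℝ), 0 < n →
      ENNReal.ofReal (2 * Real.sqrt (2 / n) * Real.exp (-1) * g (|m| + Real.sqrt (2 / n))) ≤
        ∫⁻ lam : ℝ, ENNReal.ofReal (Real.exp (-n * (lam - m) ^ 2 / 2) * g lam) := by
  intro m n hn
  set s := Real.sqrt (2 / n) with hs_def
  have h2n : (0:ℝ) < 2 / n := by positivity
  have hs0 : 0 < s := Real.sqrt_pos.mpr h2n
  have hs2 : s ^ 2 = 2 / n := Real.sq_sqrt h2n.le
  have hgA : 0 ≤ g (|m| + s) := hnonneg _
  have key : ∀ lam ∈ Set.Icc (m - s) (m + s),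
      ENNReal.ofReal (Real.exp (-1) * g (|m| + s)) ≤
        ENNReal.ofReal (Real.exp (-n * (lam - m) ^ 2 / 2) * g lam) := by
    intro lam hlam
    apply ENNReal.ofReal_le_ofReal
    have h1 : |lam - m| ≤ s := abs_le.mpr ⟨by linarith [hlam.1], by linarith [hlam.2]⟩
    have h2 : (lam - m) ^ 2 ≤ 2 / n := by
      rw [← hs2, ← sq_abs]
      exact pow_le_pow_left₀ (abs_nonneg _) h1 2
    have hexp : Real.exp (-1) ≤ Real.exp (-n * (lam - m) ^ 2 / 2) := by
      apply Real.exp_le_exp.mpr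
      have h3 : n * (lam - m) ^ 2 ≤ n * (2 / n) := mul_le_mul_of_nonneg_left h2 hn.le
      rw [mul_div_cancel₀ _ hn.ne'] at h3
      linarith
    have hgl : g lam = g |lam| := by
      rcases le_or_gt 0 lam with h | h
      · rw [abs_of_nonneg h]
      · rw [abs_of_neg h, heven]
    have habs : |lam| ≤ |m| + s := by
      calc |lam| = |m + (lam - m)| := by ring_nf
        _ ≤ |m| + |lam - m| := abs_add_le _ _
        _ ≤ |m| + s := by linarith
    have hg : g (|m| + s) ≤ g lam := by
      rw [hgl]
      exact hmono (abs_nonneg lam) (Set.mem_Ici.mpr (by positivity)) habs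
    exact mul_le_mul hexp hg hgA (Real.exp_pos _).le
  have hmeas2 : Measurable fun lam : ℝ =>
      ENNReal.ofReal (Real.exp (-n * (lam - m) ^ 2 / 2) * g lam) := by
    apply Measurable.ennreal_ofReal
    exact (((measurable_id.sub_const m).pow_const 2).const_mul (-n)).div_const 2
      |>.exp.mul hmeas
  calc ENNReal.ofReal (2 * s * Real.exp (-1) * g (|m| + s))
      = ENNReal.ofReal (Real.exp (-1) * g (|m| + s)) * ENNReal.ofReal (2 * s) := by
        rw [← ENNReal.ofReal_mul (by positivity)]
        ring_nf
    _ = ∫⁻ _ in Set.Icc (m - s) (m + s), ENNReal.ofReal (Real.exp (-1) * g (|m| + s)) := by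
        rw [setLIntegral_const, Real.volume_Icc]
        congr 1
        ring
    _ ≤ ∫⁻ lam in Set.Icc (m - s) (m + s),
          ENNReal.ofReal (Real.exp (-n * (lam - m) ^ 2 / 2) * g lam) :=
        setLIntegral_mono hmeas2 key
    _ ≤ ∫⁻ lam : ℝ, ENNReal.ofReal (Real.exp (-n * (lam - m) ^ 2 / 2) * g lam) :=
        setLIntegral_le_lintegral _ _
end

section
/- Thresholding bandits, value of the inner infimum: Let K ≥ 1, 𝔗 ∈ ℝ, and μ ∈ ℝ^K with μ_a ≠ 𝔗 for all a. For a subset i ⊆ {1,…,K} let S_i = {λ ∈ ℝ^K : λ_a > 𝔗 for all a ∈ i and λ_a < 𝔗 for all a ∉ i}, let i(μ) = {a : μ_a > 𝔗}, and let Alt(μ) = ⋃_{i ≠ i(μ)} S_i. Then for every w ∈ Σ_K: inf_{λ ∈ Alt(μ)} Σ_{a=1}^K w_a·(μ_a − λ_a)²/2 = min_{a∈{1,…,K}} w_a·(μ_a − 𝔗)²/2. -/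
lemma stmt15_mem (K : ℕ) (𝔗 : ℝ) (μ : Fin K → ℝ) (hμ : ∀ b, μ b ≠ 𝔗) (a : Fin K)
    (t : ℝ) (ht : t ≠ 𝔗) (hcross : (𝔗 < t) ↔ ¬(𝔗 < μ a)) :
    Function.update μ a t ∈
      (⋃ i ∈ {i : Set (Fin K) | i ≠ {b | μ b > 𝔗}},
        {lam : Fin K → ℝ | (∀ b ∈ i, lam b > 𝔗) ∧ ∀ b ∉ i, lam b < 𝔗}) := by
  rw [Set.mem_iUnion₂]
  refine ⟨{b | Function.update μ a t b > 𝔗}, ?_, fun b hb => hb, fun b hb => ?_⟩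
  · intro h
    have := Set.ext_iff.mp h a
    simp only [Set.mem_setOf_eq, Function.update_self] at this
    exact iff_not_self (this.symm.trans hcross)
  · simp only [Set.mem_setOf_eq, not_lt] at hb
    refine lt_of_le_of_ne hb ?_
    by_cases hba : b = a
    · subst hba; simpa using ht
    · simpa [Function.update_of_ne hba] using hμ b

/-- thresholding bandits, value of the inner infimum. -/
theorem stmt15 (K : ℕ) (hK : 1 ≤ K) (𝔗 : ℝ) (μ : Fin K → ℝ) (hμ : ∀ a, μ a ≠ 𝔗)
    (w : Fin K → ℝ) (hw : w ∈ stdSimplex ℝ (Fin K)) :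
    sInf ((fun lam : Fin K → ℝ => ∑ a, w a * (μ a - lam a) ^ 2 / 2) ''
        (⋃ i ∈ {i : Set (Fin K) | i ≠ {a | μ a > 𝔗}},
          {lam : Fin K → ℝ | (∀ a ∈ i, lam a > 𝔗) ∧ ∀ a ∉ i, lam a < 𝔗})) =
      ⨅ a, w a * (μ a - 𝔗) ^ 2 / 2 := by
  haveI : Nonempty (Fin K) := ⟨⟨0, hK⟩⟩
  have hw0 : ∀ b, 0 ≤ w b := hw.1
  set f : Fin K → ℝ := fun a => w a * (μ a - 𝔗) ^ 2 / 2 with hfdef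
  have hbdd : BddBelow (Set.range f) := (Set.finite_range f).bddBelow
  obtain ⟨a₀, -, ha₀⟩ := Finset.exists_min_image Finset.univ f ⟨⟨0, hK⟩, Finset.mem_univ _⟩
  have hinf : (⨅ a, f a) = f a₀ :=
    le_antisymm (ciInf_le hbdd a₀) (le_ciInf fun a => ha₀ a (Finset.mem_univ a))
  have hcost : ∀ (a : Fin K) (t : ℝ),
      (∑ b, w b * (μ b - Function.update μ a t b) ^ 2 / 2) = w a * (μ a - t) ^ 2 / 2 := by
    intro a t
    rw [Finset.sum_eq_single a]
    · simp
    · intro b _ hb; simp [Function.update_of_ne hb]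
    · simp
  set σ : ℝ := if 𝔗 < μ a₀ then -1 else 1 with hσ
  have hcross : ∀ ε : ℝ, 0 < ε → ((𝔗 < 𝔗 + σ * ε) ↔ ¬ 𝔗 < μ a₀) := by
    intro ε hε
    rw [hσ]; split_ifs with h
    · constructor
      · intro h'; exfalso; nlinarith
      · intro h'; exact absurd h h'
    · constructor
      · intro _; exact h
      · intro _; nlinarith
  have htne : ∀ ε : ℝ, 0 < ε → 𝔗 + σ * ε ≠ 𝔗 := by
    intro ε hε h
    have hσ0 : σ ≠ 0 := by rw [hσ]; split_ifs <;> norm_num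
    have hme : σ * ε = 0 := by linarith
    rcases mul_eq_zero.mp hme with h' | h'
    · exact hσ0 h'
    · exact hε.ne' h'
  have hmem : ∀ ε : ℝ, 0 < ε →
      (w a₀ * (μ a₀ - (𝔗 + σ * ε)) ^ 2 / 2) ∈
        ((fun lam : Fin K → ℝ => ∑ a, w a * (μ a - lam a) ^ 2 / 2) ''
          (⋃ i ∈ {i : Set (Fin K) | i ≠ {a | μ a > 𝔗}},
            {lam : Fin K → ℝ | (∀ a ∈ i, lam a > 𝔗) ∧ ∀ a ∉ i, lam a < 𝔗})) := by
    intro ε hε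
    exact ⟨Function.update μ a₀ (𝔗 + σ * ε),
      stmt15_mem K 𝔗 μ hμ a₀ _ (htne ε hε) (hcross ε hε), hcost a₀ _⟩
  have hbddS : BddBelow ((fun lam : Fin K → ℝ => ∑ a, w a * (μ a - lam a) ^ 2 / 2) ''
      (⋃ i ∈ {i : Set (Fin K) | i ≠ {a | μ a > 𝔗}},
        {lam : Fin K → ℝ | (∀ a ∈ i, lam a > 𝔗) ∧ ∀ a ∉ i, lam a < 𝔗})) := by
    refine ⟨0, fun x hx => ?_⟩
    obtain ⟨lam, -, rfl⟩ := hx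
    exact Finset.sum_nonneg fun b _ => div_nonneg (mul_nonneg (hw0 b) (sq_nonneg _)) two_pos.le
  refine le_antisymm ?_ ?_
  · rw [hinf]
    have hg : Filter.Tendsto (fun ε : ℝ => w a₀ * (μ a₀ - (𝔗 + σ * ε)) ^ 2 / 2)
        (nhdsWithin 0 (Set.Ioi 0)) (nhds (f a₀)) := by
      have hc : Continuous (fun ε : ℝ => w a₀ * (μ a₀ - (𝔗 + σ * ε)) ^ 2 / 2) := by
        fun_prop
      have := hc.tendsto 0
      simp only [mul_zero, add_zero] at this
      exact this.mono_left nhdsWithin_le_nhds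
    refine ge_of_tendsto hg ?_
    filter_upwards [self_mem_nhdsWithin] with ε hε
    exact csInf_le hbddS (hmem ε hε)
  · refine le_csInf ⟨_, hmem 1 one_pos⟩ ?_
    rintro x ⟨lam, hlam, rfl⟩
    rw [Set.mem_iUnion₂] at hlam
    obtain ⟨i, hi, h1, h2⟩ := hlam
    have ha' : ∃ a, ¬ (a ∈ i ↔ 𝔗 < μ a) := by
      by_contra hc
      push_neg at hc
      exact hi (Set.ext fun a => hc a)
    obtain ⟨a, ha⟩ := ha'
    rw [not_iff] at ha
    have key : (μ a - 𝔗) ^ 2 ≤ (μ a - lam a) ^ 2 := by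
      by_cases hai : a ∈ i
      · have hla := h1 a hai
        have hμa : μ a < 𝔗 := lt_of_le_of_ne (not_lt.1 fun h => (ha.mpr h) hai) (hμ a)
        nlinarith
      · have hla := h2 a hai
        have hμa : 𝔗 < μ a := ha.mp hai
        nlinarith
    calc (⨅ a, f a) ≤ f a := ciInf_le hbdd a
      _ ≤ w a * (μ a - lam a) ^ 2 / 2 := by
          have := mul_le_mul_of_nonneg_left key (hw0 a); simp only [hfdef]; linarith
      _ ≤ ∑ b, w b * (μ b - lam b) ^ 2 / 2 :=
          Finset.single_le_sum (f := fun b => w b * (μ b - lam b) ^ 2 / 2)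
            (fun b _ => div_nonneg (mul_nonneg (hw0 b) (sq_nonneg _))
            two_pos.le) (Finset.mem_univ a)
end

section
/- Best arm identification, value of the inner infimum: Let K ≥ 2 and μ ∈ ℝ^K with a unique best arm i, i.e. μ_i > μ_a for all a ≠ i. Let Alt(μ) = ⋃_{j ≠ i} { λ ∈ ℝ^K : λ_j > λ_b for all b ≠ j }. Let w ∈ Σ_K satisfy w_i + w_a > 0 for every a ≠ i, and for a ≠ i set μ̄_{i,a}^w = (w_i·μ_i + w_a·μ_a)/(w_i + w_a). Then inf_{λ ∈ Alt(μ)} Σ_{b=1}^K w_b·(μ_b − λ_b)²/2 = min_{a ≠ i} [ w_i·(μ_i − μ̄_{i,a}^w)²/2 + w_a·(μ_a − μ̄_{i,a}^w)²/2 ]. -/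
open Filter Topology

private lemma aux_closed (wi wa mi ma : ℝ) (hs : 0 < wi + wa) :
    wi * (mi - (wi * mi + wa * ma) / (wi + wa)) ^ 2 / 2 +
      wa * (ma - (wi * mi + wa * ma) / (wi + wa)) ^ 2 / 2 =
      wi * wa * (mi - ma) ^ 2 / (2 * (wi + wa)) := by
  field_simp
  ring

private lemma aux_key (wi wj x y d : ℝ) (hwi : 0 ≤ wi) (hwj : 0 ≤ wj) (hs : 0 < wi + wj)
    (hd : 0 ≤ d) (hxy : d ≤ x - y) :
    wi * wj * d ^ 2 / (2 * (wi + wj)) ≤ wi * x ^ 2 / 2 + wj * y ^ 2 / 2 := by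
  rw [div_le_iff₀ (by positivity)]
  nlinarith [sq_nonneg (wi * x + wj * y),
    mul_nonneg (mul_nonneg hwi hwj)
      (mul_nonneg (by linarith : (0:ℝ) ≤ x - y - d) (by linarith : (0:ℝ) ≤ x - y + d))]

private lemma aux_argmin (wi wa wb mi ma mb : ℝ) (hwi : 0 < wi) (hwa : 0 ≤ wa)
    (hwb : 0 ≤ wb) (hda : ma < mi) (hdb : mb < mi)
    (hgt : (wi * mi + wa * ma) / (wi + wa) < mb)
    (hmin : wi * wa * (mi - ma) ^ 2 / (2 * (wi + wa)) ≤
      wi * wb * (mi - mb) ^ 2 / (2 * (wi + wb))) : False := by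
  have hsa : 0 < wi + wa := by linarith
  have hsb : 0 < wi + wb := by linarith
  rw [div_lt_iff₀ hsa] at hgt
  rw [div_le_div_iff₀ (by positivity) (by positivity)] at hmin
  have h1 : (mi - mb) * (wi + wa) < wa * (mi - ma) := by nlinarith
  have hwa' : 0 < wa := by nlinarith
  have h2 : 0 < wa * (mi - ma) + (mi - mb) * (wi + wa) := by nlinarith
  have h3 : 0 < wa ^ 2 * (mi - ma) ^ 2 - (mi - mb) ^ 2 * (wi + wa) ^ 2 := by
    nlinarith [mul_pos (sub_pos.mpr h1) h2]
  have h4 := mul_le_mul_of_nonneg_right hmin hsa.le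
  have h5 : wb * ((mi - mb) ^ 2 * (wi + wa) ^ 2) ≤ wb * (wa ^ 2 * (mi - ma) ^ 2) := by
    nlinarith [mul_nonneg hwb h3.le]
  have h6 := mul_le_mul_of_nonneg_left h5 (by linarith : (0:ℝ) ≤ 2 * wi)
  nlinarith [h4, h6,
    mul_pos (mul_pos (mul_pos hwi hwa') (mul_pos (sub_pos.mpr hda) (sub_pos.mpr hda))) (mul_pos hwi hwi),
    mul_nonneg (mul_nonneg (mul_nonneg hwi.le hwa'.le) (mul_pos (sub_pos.mpr hda) (sub_pos.mpr hda)).le) (mul_nonneg hwi.le hwb),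
    mul_nonneg (mul_nonneg (mul_nonneg hwi.le hwa'.le) (mul_pos (sub_pos.mpr hda) (sub_pos.mpr hda)).le) (mul_nonneg hwi.le hwa)]

/-- best arm identification, value of the inner infimum. -/
theorem stmt18 (K : ℕ) (hK : 2 ≤ K) (i : Fin K) (μ : Fin K → ℝ)
    (hbest : ∀ a, a ≠ i → μ a < μ i)
    (w : Fin K → ℝ) (hw : w ∈ stdSimplex ℝ (Fin K))
    (hpos : ∀ a, a ≠ i → 0 < w i + w a) :
    sInf ((fun lam : Fin K → ℝ => ∑ b, w b * (μ b - lam b) ^ 2 / 2) ''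
        (⋃ j ∈ {j : Fin K | j ≠ i}, {lam : Fin K → ℝ | ∀ b, b ≠ j → lam b < lam j})) =
      ⨅ a : {a : Fin K // a ≠ i},
        w i * (μ i - (w i * μ i + w a.1 * μ a.1) / (w i + w a.1)) ^ 2 / 2 +
          w a.1 * (μ a.1 - (w i * μ i + w a.1 * μ a.1) / (w i + w a.1)) ^ 2 / 2 := by
  classical
  haveI : Nontrivial (Fin K) := Fin.nontrivial_iff_two_le.mpr hK
  obtain ⟨a1, ha1⟩ := exists_ne i
  haveI : Nonempty {a : Fin K // a ≠ i} := ⟨⟨a1, ha1⟩⟩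
  have hw0 : ∀ b, 0 ≤ w b := hw.1
  set f : (Fin K → ℝ) → ℝ := fun lam : Fin K → ℝ => ∑ b, w b * (μ b - lam b) ^ 2 / 2 with hf
  set A : Set (Fin K → ℝ) :=
    ⋃ j ∈ {j : Fin K | j ≠ i}, {lam : Fin K → ℝ | ∀ b, b ≠ j → lam b < lam j} with hA
  set v : {a : Fin K // a ≠ i} → ℝ := fun a =>
    w i * (μ i - (w i * μ i + w a.1 * μ a.1) / (w i + w a.1)) ^ 2 / 2 +
      w a.1 * (μ a.1 - (w i * μ i + w a.1 * μ a.1) / (w i + w a.1)) ^ 2 / 2 with hv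
  have hvclosed : ∀ a : {a : Fin K // a ≠ i},
      v a = w i * w a.1 * (μ i - μ a.1) ^ 2 / (2 * (w i + w a.1)) :=
    fun a => aux_closed _ _ _ _ (hpos a.1 a.2)
  have hmemA : ∀ (j : Fin K), j ≠ i → ∀ lam : Fin K → ℝ,
      (∀ b, b ≠ j → lam b < lam j) → lam ∈ A := by
    intro j hj lam hlam
    simp only [hA, Set.mem_iUnion, Set.mem_setOf_eq]
    exact ⟨j, hj, hlam⟩
  have hfnonneg : ∀ lam, 0 ≤ f lam := fun lam =>
    Finset.sum_nonneg fun b _ => by have := hw0 b; positivity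
  have hbdd : BddBelow (f '' A) := ⟨0, by rintro x ⟨lam, -, rfl⟩; exact hfnonneg lam⟩
  have hAne : A.Nonempty :=
    ⟨(fun b => if b = a1 then 1 else 0),
      hmemA a1 ha1 _ (fun b hb => by simp [hb])⟩
  have hsum2 : ∀ (j : Fin K), j ≠ i → ∀ lam : Fin K → ℝ,
      (∀ b, b ≠ i → b ≠ j → lam b = μ b) →
      f lam = w i * (μ i - lam i) ^ 2 / 2 + w j * (μ j - lam j) ^ 2 / 2 := by
    intro j hj lam hlam
    have hz : ∀ b ∈ Finset.univ, b ∉ ({i, j} : Finset (Fin K)) →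
        w b * (μ b - lam b) ^ 2 / 2 = 0 := by
      intro b _ hb
      simp only [Finset.mem_insert, Finset.mem_singleton, not_or] at hb
      rw [hlam b hb.1 hb.2]
      simp
    calc f lam = ∑ b ∈ ({i, j} : Finset (Fin K)), w b * (μ b - lam b) ^ 2 / 2 :=
          (Finset.sum_subset (Finset.subset_univ _) hz).symm
      _ = w i * (μ i - lam i) ^ 2 / 2 + w j * (μ j - lam j) ^ 2 / 2 :=
          Finset.sum_pair (Ne.symm hj)
  -- lower bound
  have hlow : ∀ lam ∈ A, (⨅ a, v a) ≤ f lam := by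
    intro lam hlam
    simp only [hA, Set.mem_iUnion, Set.mem_setOf_eq] at hlam
    obtain ⟨j, hj, hlt⟩ := hlam
    have hineq : v ⟨j, hj⟩ ≤ f lam := by
      have hpair : ∑ b ∈ ({i, j} : Finset (Fin K)), w b * (μ b - lam b) ^ 2 / 2 ≤
          ∑ b, w b * (μ b - lam b) ^ 2 / 2 :=
        Finset.sum_le_sum_of_subset_of_nonneg (Finset.subset_univ _)
          (fun b _ _ => by have := hw0 b; positivity)
      rw [Finset.sum_pair (Ne.symm hj)] at hpair
      calc v ⟨j, hj⟩ = w i * w j * (μ i - μ j) ^ 2 / (2 * (w i + w j)) := hvclosed _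
        _ ≤ w i * (μ i - lam i) ^ 2 / 2 + w j * (μ j - lam j) ^ 2 / 2 :=
            aux_key _ _ _ _ _ (hw0 i) (hw0 j) (hpos j hj)
              (by linarith [hbest j hj]) (by have := hlt i (Ne.symm hj); linarith)
        _ ≤ ∑ b, w b * (μ b - lam b) ^ 2 / 2 := hpair
        _ = f lam := rfl
    exact le_trans (ciInf_le (Set.Finite.bddBelow (Set.finite_range v)) ⟨j, hj⟩) hineq
  obtain ⟨a0, ha0⟩ := Finite.exists_min v
  have hupper : sInf (f '' A) ≤ v a0 := by
    rcases eq_or_lt_of_le (hw0 i) with hwi0 | hwi0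
    · -- w i = 0
      obtain ⟨j0, hj0⟩ := Finite.exists_max (fun a : {a : Fin K // a ≠ i} => μ a.1)
      have hij0 : i ≠ j0.1 := Ne.symm j0.2
      have key : ∀ t : ℝ, 0 < t → sInf (f '' A) ≤ w j0.1 * t ^ 2 / 2 := by
        intro t ht
        set lam : Fin K → ℝ :=
          fun b => if b = j0.1 then μ j0.1 + t else if b = i then μ j0.1 else μ b with hlamdef
        have e1 : lam j0.1 = μ j0.1 + t := by simp [hlamdef]
        have e2 : lam i = μ j0.1 := by simp [hlamdef, hij0]
        have e3 : ∀ b, b ≠ i → b ≠ j0.1 → lam b = μ b := fun b h1 h2 => by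
          simp [hlamdef, h1, h2]
        have hmem : lam ∈ A := by
          refine hmemA j0.1 j0.2 lam (fun b hb => ?_)
          rw [e1]
          by_cases hbi : b = i
          · rw [hbi, e2]; linarith
          · rw [e3 b hbi hb]
            have := hj0 ⟨b, hbi⟩
            simp only at this
            linarith
        have hfval : f lam = w j0.1 * t ^ 2 / 2 := by
          rw [hsum2 j0.1 j0.2 lam e3, e1, e2, ← hwi0]
          ring
        calc sInf (f '' A) ≤ f lam := csInf_le hbdd ⟨lam, hmem, rfl⟩
          _ = _ := hfval
      have hten : Tendsto (fun t : ℝ => w j0.1 * t ^ 2 / 2) (𝓝[>] 0) (𝓝 0) := by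
        have hc : Continuous fun t : ℝ => w j0.1 * t ^ 2 / 2 := by fun_prop
        have h := hc.tendsto 0
        simp only [ne_eq, OfNat.ofNat_ne_zero, not_false_eq_true, zero_pow, mul_zero,
          zero_div] at h
        exact h.mono_left nhdsWithin_le_nhds
      have h0 : sInf (f '' A) ≤ 0 := by
        refine ge_of_tendsto hten ?_
        filter_upwards [self_mem_nhdsWithin] with t ht using key t ht
      have hva0 : v a0 = 0 := by rw [hvclosed a0, ← hwi0]; ring
      linarith
    · -- 0 < w i
      set m0 : ℝ := (w i * μ i + w a0.1 * μ a0.1) / (w i + w a0.1) with hm0def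
      have hsa0 : 0 < w i + w a0.1 := hpos a0.1 a0.2
      have hia0 : i ≠ a0.1 := Ne.symm a0.2
      have hm0 : ∀ b, b ≠ i → μ b ≤ m0 := by
        intro b hb
        by_cases hba : b = a0.1
        · subst hba
          rw [hm0def, le_div_iff₀ hsa0]
          nlinarith [hbest a0.1 a0.2, hw0 i]
        · by_contra hgt
          push_neg at hgt
          rw [hm0def] at hgt
          exact aux_argmin (w i) (w a0.1) (w b) (μ i) (μ a0.1) (μ b) hwi0 (hw0 a0.1) (hw0 b)
            (hbest a0.1 a0.2) (hbest b hb) hgt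
            (by have h := ha0 ⟨b, hb⟩; rw [hvclosed a0, hvclosed ⟨b, hb⟩] at h; exact h)
      have key : ∀ t : ℝ, 0 < t → sInf (f '' A) ≤
          w i * (μ i - m0) ^ 2 / 2 + w a0.1 * (μ a0.1 - (m0 + t)) ^ 2 / 2 := by
        intro t ht
        set lam : Fin K → ℝ :=
          fun b => if b = a0.1 then m0 + t else if b = i then m0 else μ b with hlamdef
        have e1 : lam a0.1 = m0 + t := by simp [hlamdef]
        have e2 : lam i = m0 := by simp [hlamdef, hia0]
        have e3 : ∀ b, b ≠ i → b ≠ a0.1 → lam b = μ b := fun b h1 h2 => by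
          simp [hlamdef, h1, h2]
        have hmem : lam ∈ A := by
          refine hmemA a0.1 a0.2 lam (fun b hb => ?_)
          rw [e1]
          by_cases hbi : b = i
          · rw [hbi, e2]; linarith
          · rw [e3 b hbi hb]
            have := hm0 b hbi
            linarith
        have hfval : f lam =
            w i * (μ i - m0) ^ 2 / 2 + w a0.1 * (μ a0.1 - (m0 + t)) ^ 2 / 2 := by
          rw [hsum2 a0.1 a0.2 lam e3, e1, e2]
        calc sInf (f '' A) ≤ f lam := csInf_le hbdd ⟨lam, hmem, rfl⟩
          _ = _ := hfval
      have he : w i * (μ i - m0) ^ 2 / 2 + w a0.1 * (μ a0.1 - (m0 + 0)) ^ 2 / 2 = v a0 := by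
        rw [add_zero, hm0def, hvclosed a0]
        exact aux_closed _ _ _ _ hsa0
      have hten : Tendsto
          (fun t : ℝ => w i * (μ i - m0) ^ 2 / 2 + w a0.1 * (μ a0.1 - (m0 + t)) ^ 2 / 2)
          (𝓝[>] 0) (𝓝 (v a0)) := by
        have hc : Continuous
            (fun t : ℝ => w i * (μ i - m0) ^ 2 / 2 + w a0.1 * (μ a0.1 - (m0 + t)) ^ 2 / 2) := by
          fun_prop
        have h := hc.tendsto 0
        rw [he] at h
        exact h.mono_left nhdsWithin_le_nhds
      refine ge_of_tendsto hten ?_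
      filter_upwards [self_mem_nhdsWithin] with t ht using key t ht
  refine le_antisymm (hupper.trans (le_ciInf fun a => ha0 a)) ?_
  refine le_csInf (hAne.image f) ?_
  rintro x ⟨lam, hlam, rfl⟩
  exact hlow lam hlam
end
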